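/- arXiv:1409.6929 — 3 statements merged into one kernel-verified Lean document; each statement's English description precedes it below -/
import Mathlib

section
/- The commutator subgroup [G,G] of G equals {E₄, −E₄}, where E₄ is the 4×4 identity matrix; in particular [G,G] has order two. -/
open Matrix Complex

noncomputable def g1 : Matrix (Fin 4) (Fin 4) ℂ :=
  !![1, 0, 0, 0; 0, -1, 0, 0; 0, 0, 1, 0; 0, 0, 0, -1]

noncomputable def g2 : Matrix (Fin 4) (Fin 4) ℂ :=
  !![0, I, 0, 0; -I, 0, 0, 0; 0, 0, 0, -I; 0, 0, I, 0]

noncomputable def g3 : Matrix (Fin 4) (Fin 4) ℂ :=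
  !![0, 1, 0, 0; 1, 0, 0, 0; 0, 0, 0, 1; 0, 0, 1, 0]

noncomputable def g4 : Matrix (Fin 4) (Fin 4) ℂ :=
  !![0, 0, 0, 1; 0, 0, -1, 0; 0, -1, 0, 0; 1, 0, 0, 0]

noncomputable def g5 : Matrix (Fin 4) (Fin 4) ℂ :=
  !![0, 0, 0, I; 0, 0, -I, 0; 0, I, 0, 0; -I, 0, 0, 0]

lemma hg1 : g1 * g1 = 1 := by
  ext i j
  fin_cases i <;> fin_cases j <;>
    simp [g1, Matrix.mul_apply, Fin.sum_univ_four, Matrix.one_apply,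
      Matrix.vecHead, Matrix.vecTail]

lemma hg2 : g2 * g2 = 1 := by
  ext i j
  fin_cases i <;> fin_cases j <;>
    simp [g2, Matrix.mul_apply, Fin.sum_univ_four, Matrix.one_apply,
      Matrix.vecHead, Matrix.vecTail, Complex.I_mul_I]

lemma hg3 : g3 * g3 = 1 := by
  ext i j
  fin_cases i <;> fin_cases j <;>
    simp [g3, Matrix.mul_apply, Fin.sum_univ_four, Matrix.one_apply,
      Matrix.vecHead, Matrix.vecTail]

lemma hg4 : g4 * g4 = 1 := by
  ext i j
  fin_cases i <;> fin_cases j <;>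
    simp [g4, Matrix.mul_apply, Fin.sum_univ_four, Matrix.one_apply,
      Matrix.vecHead, Matrix.vecTail]

lemma hg5 : g5 * g5 = 1 := by
  ext i j
  fin_cases i <;> fin_cases j <;>
    simp [g5, Matrix.mul_apply, Fin.sum_univ_four, Matrix.one_apply,
      Matrix.vecHead, Matrix.vecTail, Complex.I_mul_I]

/-- The generators as elements of `GL₄(ℂ)` (each is an involution). -/
noncomputable def u1 : GL (Fin 4) ℂ := ⟨g1, g1, hg1, hg1⟩
noncomputable def u2 : GL (Fin 4) ℂ := ⟨g2, g2, hg2, hg2⟩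
noncomputable def u3 : GL (Fin 4) ℂ := ⟨g3, g3, hg3, hg3⟩
noncomputable def u4 : GL (Fin 4) ℂ := ⟨g4, g4, hg4, hg4⟩
noncomputable def u5 : GL (Fin 4) ℂ := ⟨g5, g5, hg5, hg5⟩

/-- The group `G ⊆ GL₄(ℂ)` generated by the five matrices. -/
noncomputable def G : Subgroup (GL (Fin 4) ℂ) :=
  Subgroup.closure {u1, u2, u3, u4, u5}

/-!
Distinct generators anticommute. The relation "`x` and `y` commute or anticommute" is preserved
by products and inverses in each variable, so any two elements of `G` commute up to the central
sign `-1`, and every commutator in `G` is `1` or `-1`. Since `⁅g₁, g₂⁆ = -1`, the commutator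
subgroup is exactly `{1, -1}`.
-/

section CommuteUpToSign

variable {M : Type*} [Group M] [HasDistribNeg M]

open scoped commutatorElement

theorem commutatorElement_eq_neg_one_of_mul_eq_neg {x y : M} (h : x * y = -(y * x)) :
    ⁅x, y⁆ = -1 := by
  rw [commutatorElement_def, h, neg_mul, mul_inv_cancel_right, neg_mul, mul_inv_cancel]

def CommuteUpToSign (x y : M) : Prop := x * y = y * x ∨ x * y = -(y * x)

namespace CommuteUpToSign

theorem refl (x : M) : CommuteUpToSign x x := Or.inl rfl

theorem symm {x y : M} (h : CommuteUpToSign x y) : CommuteUpToSign y x :=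
  h.imp Eq.symm fun h => by rw [h, neg_neg]

instance : Std.Symm (CommuteUpToSign (M := M)) := ⟨fun _ _ => symm⟩

theorem one_left (x : M) : CommuteUpToSign 1 x := Or.inl (by rw [one_mul, mul_one])

theorem mul_left {x y z : M} (hx : CommuteUpToSign x z) (hy : CommuteUpToSign y z) :
    CommuteUpToSign (x * y) z := by
  rcases hx with hx | hx <;> rcases hy with hy | hy
  · exact Or.inl (by rw [mul_assoc, hy, ← mul_assoc, hx, mul_assoc])
  · exact Or.inr (by rw [mul_assoc, hy, mul_neg, ← mul_assoc, hx, mul_assoc])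
  · exact Or.inr (by rw [mul_assoc, hy, ← mul_assoc, hx, neg_mul, mul_assoc])
  · exact Or.inl (by rw [mul_assoc, hy, mul_neg, ← mul_assoc, hx, neg_mul, neg_neg, mul_assoc])

theorem inv_left {x z : M} (h : CommuteUpToSign x z) : CommuteUpToSign x⁻¹ z := by
  refine h.imp (fun h => (Commute.inv_left h).eq) fun h => ?_
  calc x⁻¹ * z = x⁻¹ * (z * x) * x⁻¹ := by rw [mul_assoc, mul_inv_cancel_right]
    _ = x⁻¹ * -(x * z) * x⁻¹ := by rw [h, neg_neg]
    _ = -(z * x⁻¹) := by rw [mul_neg, neg_mul, inv_mul_cancel_left]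

theorem commutatorElement_eq_one_or_neg_one {x y : M} (h : CommuteUpToSign x y) :
    ⁅x, y⁆ = 1 ∨ ⁅x, y⁆ = -1 :=
  h.imp commutatorElement_eq_one_iff_commute.mpr commutatorElement_eq_neg_one_of_mul_eq_neg

end CommuteUpToSign

open Subgroup

theorem commuteUpToSign_of_mem_closure {S : Set M} (hS : S.Pairwise CommuteUpToSign) {x y : M}
    (hx : x ∈ closure S) (hy : y ∈ closure S) : CommuteUpToSign x y := by
  induction hx, hy using closure_induction₂ with
  | mem a b ha hb =>
    obtain rfl | hab := eq_or_ne a b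
    exacts [.refl a, hS ha hb hab]
  | one_left x _ => exact .one_left x
  | one_right x _ => exact (CommuteUpToSign.one_left x).symm
  | mul_left _ _ _ _ _ _ hx hy => exact hx.mul_left hy
  | mul_right _ _ _ _ _ _ hy hz => exact (hy.symm.mul_left hz.symm).symm
  | inv_left _ _ _ _ h => exact h.inv_left
  | inv_right _ _ _ _ h => exact h.symm.inv_left.symm

theorem coe_zpowers_neg_one : (zpowers (-1 : M) : Set M) = {1, -1} := by
  ext x
  simp only [SetLike.mem_coe, mem_zpowers_iff, Set.mem_insert_iff, Set.mem_singleton_iff]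
  constructor
  · rintro ⟨n, rfl⟩
    exact n.even_or_odd.imp Even.neg_one_zpow Odd.neg_one_zpow
  · rintro (rfl | rfl)
    exacts [⟨0, zpow_zero _⟩, ⟨1, zpow_one _⟩]

theorem commutator_closure_eq_zpowers_neg_one {S : Set M} (hS : S.Pairwise CommuteUpToSign)
    {a b : M} (ha : a ∈ S) (hb : b ∈ S) (hab : a * b = -(b * a)) :
    ⁅closure S, closure S⁆ = zpowers (-1) := by
  apply le_antisymm
  · rw [commutator_le]
    intro x hx y hy
    rcases (commuteUpToSign_of_mem_closure hS hx hy).commutatorElement_eq_one_or_neg_one with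
      h | h
    · rw [h]; exact one_mem _
    · rw [h]; exact mem_zpowers _
  · rw [zpowers_le]
    have hmem := commutator_mem_commutator (subset_closure ha) (subset_closure hb)
    rwa [commutatorElement_eq_neg_one_of_mul_eq_neg hab] at hmem

end CommuteUpToSign

theorem generators_anticommute :
    u1 * u2 = -(u2 * u1) ∧ u1 * u3 = -(u3 * u1) ∧ u1 * u4 = -(u4 * u1) ∧
    u1 * u5 = -(u5 * u1) ∧ u2 * u3 = -(u3 * u2) ∧ u2 * u4 = -(u4 * u2) ∧
    u2 * u5 = -(u5 * u2) ∧ u3 * u4 = -(u4 * u3) ∧ u3 * u5 = -(u5 * u3) ∧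
    u4 * u5 = -(u5 * u4) := by
  refine ⟨?_, ?_, ?_, ?_, ?_, ?_, ?_, ?_, ?_, ?_⟩ <;>
  · ext : 1
    simp only [Units.val_mul, Units.val_neg, u1, u2, u3, u4, u5, g1, g2, g3, g4, g5]
    simp [Matrix.cons_mul, Matrix.vecMul_cons, Matrix.neg_cons]

theorem pairwise_commuteUpToSign_generators :
    ({u1, u2, u3, u4, u5} : Set (GL (Fin 4) ℂ)).Pairwise CommuteUpToSign := by
  simp only [Set.pairwise_insert_of_symm, Set.pairwise_singleton, Set.mem_insert_iff,
    Set.mem_singleton_iff, forall_eq_or_imp, forall_eq, true_and]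
  obtain ⟨h12, h13, h14, h15, h23, h24, h25, h34, h35, h45⟩ := generators_anticommute
  exact ⟨⟨⟨fun _ => Or.inr h45, fun _ => Or.inr h34, fun _ => Or.inr h35⟩,
    fun _ => Or.inr h23, fun _ => Or.inr h24, fun _ => Or.inr h25⟩,
    fun _ => Or.inr h12, fun _ => Or.inr h13, fun _ => Or.inr h14, fun _ => Or.inr h15⟩

theorem Matrix.GeneralLinearGroup.one_ne_neg_one {n R : Type*} [Fintype n] [DecidableEq n]
    [Nonempty n] [Ring R] [CharZero R] :
    (1 : GL n R) ≠ -1 := by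
  intro h
  obtain ⟨i⟩ := ‹Nonempty n›
  have hii := congrArg (fun u : GL n R => (u : Matrix n n R) i i) h
  norm_num at hii

theorem stmt_0 :
    ((⁅G, G⁆ : Subgroup (GL (Fin 4) ℂ)) : Set (GL (Fin 4) ℂ)) = {1, -1} ∧
      Nat.card (↥(⁅G, G⁆ : Subgroup (GL (Fin 4) ℂ))) = 2 := by
  have hG : ⁅G, G⁆ = Subgroup.zpowers (-1) :=
    commutator_closure_eq_zpowers_neg_one pairwise_commuteUpToSign_generators
      (by simp) (by simp) generators_anticommute.1
  have hset : ((⁅G, G⁆ : Subgroup (GL (Fin 4) ℂ)) : Set (GL (Fin 4) ℂ)) = {1, -1} := by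
    rw [hG, coe_zpowers_neg_one]
  refine ⟨hset, ?_⟩
  rw [← SetLike.coe_sort_coe, Nat.card_coe_set_eq, hset,
    Set.ncard_pair GeneralLinearGroup.one_ne_neg_one]
end

section
/- The abelianization G' := G/[G,G] is generated by the classes of the four matrices g₂, g₃, g₄, g₅. -/
open Matrix Complex

lemma hu2 : u2 ∈ G := Subgroup.subset_closure (by simp)
lemma hu3 : u3 ∈ G := Subgroup.subset_closure (by simp)
lemma hu4 : u4 ∈ G := Subgroup.subset_closure (by simp)
lemma hu5 : u5 ∈ G := Subgroup.subset_closure (by simp)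

lemma keyA : g2 * g3 = !![I,0,0,0; 0,-I,0,0; 0,0,-I,0; 0,0,0,I] := by
  ext i j
  fin_cases i <;> fin_cases j <;>
    simp [g2, g3, Matrix.mul_apply, Fin.sum_univ_four,
      Matrix.vecHead, Matrix.vecTail]

lemma keyB : g4 * g5 = !![-I,0,0,0; 0,-I,0,0; 0,0,I,0; 0,0,0,I] := by
  ext i j
  fin_cases i <;> fin_cases j <;>
    simp [g4, g5, Matrix.mul_apply, Fin.sum_univ_four,
      Matrix.vecHead, Matrix.vecTail]

lemma key_matrix : g2 * g3 * (g4 * g5) = g1 := by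
  rw [keyA, keyB]
  ext i j
  fin_cases i <;> fin_cases j <;>
    simp [g1, Matrix.mul_apply, Fin.sum_univ_four,
      Matrix.vecHead, Matrix.vecTail, Complex.I_mul_I]

lemma key_u : u1 = u2 * u3 * (u4 * u5) := by
  apply Units.ext
  show g1 = g2 * g3 * (g4 * g5)
  exact key_matrix.symm

lemma hu1 : u1 ∈ G := Subgroup.subset_closure (by simp)

/-- The abelianization `G' := G/[G,G]` is generated by the classes of
`g₂, g₃, g₄, g₅`. -/
theorem stmt_2 :
    Subgroup.closure
      ({Abelianization.of ⟨u2, hu2⟩, Abelianization.of ⟨u3, hu3⟩,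
        Abelianization.of ⟨u4, hu4⟩, Abelianization.of ⟨u5, hu5⟩} :
        Set (Abelianization G)) = ⊤ := by
  set T : Set (Abelianization G) :=
    {Abelianization.of ⟨u2, hu2⟩, Abelianization.of ⟨u3, hu3⟩,
     Abelianization.of ⟨u4, hu4⟩, Abelianization.of ⟨u5, hu5⟩} with hT
  set S : Set G := {⟨u1, hu1⟩, ⟨u2, hu2⟩, ⟨u3, hu3⟩, ⟨u4, hu4⟩, ⟨u5, hu5⟩} with hSdef
  have hS : Subgroup.closure S = (⊤ : Subgroup G) := by
    apply Subgroup.map_injective (Subgroup.subtype_injective G)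
    rw [MonoidHom.map_closure]
    have himg : (G.subtype) '' S = {u1, u2, u3, u4, u5} := by
      simp [hSdef, Set.image_insert_eq]
    rw [himg]
    have hmt : Subgroup.map G.subtype ⊤ = G := by
      ext x
      simp only [Subgroup.mem_map, Subgroup.mem_top, true_and, Subgroup.coe_subtype]
      constructor
      · rintro ⟨y, rfl⟩; exact y.2
      · intro h; exact ⟨⟨x, h⟩, rfl⟩
    rw [hmt]
    rfl
  have hmapS : Subgroup.closure ((Abelianization.of : G →* Abelianization G) '' S)
      = ⊤ := by
    rw [← MonoidHom.map_closure, hS, ← MonoidHom.range_eq_map]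
    exact MonoidHom.range_eq_top_of_surjective _
      (fun x => Quotient.inductionOn' x fun g => ⟨g, rfl⟩)
  rw [← hmapS]
  apply le_antisymm
  · apply Subgroup.closure_mono
    intro x hx
    rcases hx with rfl | rfl | rfl | rfl
    · exact ⟨⟨u2, hu2⟩, by simp [hSdef], rfl⟩
    · exact ⟨⟨u3, hu3⟩, by simp [hSdef], rfl⟩
    · exact ⟨⟨u4, hu4⟩, by simp [hSdef], rfl⟩
    · exact ⟨⟨u5, hu5⟩, by simp [hSdef], rfl⟩
  · rw [Subgroup.closure_le]
    rintro x ⟨y, hy, rfl⟩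
    have m2 : Abelianization.of (⟨u2, hu2⟩ : G) ∈ Subgroup.closure T :=
      Subgroup.subset_closure (by simp [hT])
    have m3 : Abelianization.of (⟨u3, hu3⟩ : G) ∈ Subgroup.closure T :=
      Subgroup.subset_closure (by simp [hT])
    have m4 : Abelianization.of (⟨u4, hu4⟩ : G) ∈ Subgroup.closure T :=
      Subgroup.subset_closure (by simp [hT])
    have m5 : Abelianization.of (⟨u5, hu5⟩ : G) ∈ Subgroup.closure T :=
      Subgroup.subset_closure (by simp [hT])
    rcases hy with rfl | rfl | rfl | rfl | rfl
    · have h1 : (⟨u1, hu1⟩ : G) = ⟨u2, hu2⟩ * ⟨u3, hu3⟩ * (⟨u4, hu4⟩ * ⟨u5, hu5⟩) :=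
        Subtype.ext key_u
      rw [h1, MonoidHom.map_mul, MonoidHom.map_mul, MonoidHom.map_mul]
      exact mul_mem (mul_mem m2 m3) (mul_mem m4 m5)
    · exact m2
    · exact m3
    · exact m4
    · exact m5
end

section
/- For every j ∈ {1,…,15}, the 14 columns of the matrix P other than the j-th column generate ℤ⁵ as a group (i.e., the subgroup of ℤ⁵ generated by any 14 of the 15 columns of P is all of ℤ⁵). -/
/-- The `5 × 15` integer degree matrix `P`. -/
def Pmat : Fin 5 → Fin 15 → ℤ :=
  ![![1,1,0,0,1,1,0,0,0,0,-2,0,0,0,0],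
    ![0,0,0,1,1,0,1,1,0,0,0,-2,0,0,0],
    ![1,0,0,0,0,1,-1,0,1,0,-1,1,-1,-1,1],
    ![1,1,1,-1,0,0,0,0,0,0,-1,1,-1,1,-1],
    ![0,1,0,0,0,1,0,-1,0,1,-1,1,1,-1,-1]]

/-- The `j`-th column of `P`, regarded as an element of `ℤ⁵`. -/
def Pcol : Fin 15 → (Fin 5 → ℤ) := fun j k => Pmat k j

def coeff : Fin 15 → Fin 5 → Fin 15 → ℤ :=
 ![
![
  ![0,0,-1,-1,1,0,0,0,0,0,0,0,0,0,0],
  ![0,0,1,1,0,0,0,0,0,0,0,0,0,0,0],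
  ![0,-1,1,0,0,1,0,0,0,0,0,0,0,0,0],
  ![0,0,1,0,0,0,0,0,0,0,0,0,0,0,0],
  ![0,1,0,1,-1,0,0,0,0,0,0,0,0,0,0]],
![
  ![0,0,-1,-1,1,0,0,0,0,0,0,0,0,0,0],
  ![0,0,1,1,0,0,0,0,0,0,0,0,0,0,0],
  ![1,0,0,1,-1,0,0,0,0,0,0,0,0,0,0],
  ![0,0,1,0,0,0,0,0,0,0,0,0,0,0,0],
  ![-1,0,1,0,0,1,0,0,0,0,0,0,0,0,0]],
![
  ![-1,-1,0,-2,2,1,0,0,0,0,0,0,0,0,0],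
  ![1,1,0,2,-1,-1,0,0,0,0,0,0,0,0,0],
  ![1,0,0,1,-1,0,0,0,0,0,0,0,0,0,0],
  ![1,1,0,1,-1,-1,0,0,0,0,0,0,0,0,0],
  ![0,1,0,1,-1,0,0,0,0,0,0,0,0,0,0]],
![
  ![1,1,-2,0,0,-1,0,0,0,0,0,0,0,0,0],
  ![-1,-1,2,0,1,1,0,0,0,0,0,0,0,0,0],
  ![0,-1,1,0,0,1,0,0,0,0,0,0,0,0,0],
  ![0,0,1,0,0,0,0,0,0,0,0,0,0,0,0],
  ![-1,0,1,0,0,1,0,0,0,0,0,0,0,0,0]],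
![
  ![1,1,-2,0,0,-1,0,0,0,0,0,0,0,0,0],
  ![0,0,1,1,0,0,0,0,0,0,0,0,0,0,0],
  ![0,-1,1,0,0,1,0,0,0,0,0,0,0,0,0],
  ![0,0,1,0,0,0,0,0,0,0,0,0,0,0,0],
  ![-1,0,1,0,0,1,0,0,0,0,0,0,0,0,0]],
![
  ![0,0,-1,-1,1,0,0,0,0,0,0,0,0,0,0],
  ![0,0,1,1,0,0,0,0,0,0,0,0,0,0,0],
  ![1,0,0,1,-1,0,0,0,0,0,0,0,0,0,0],
  ![0,0,1,0,0,0,0,0,0,0,0,0,0,0,0],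
  ![0,1,0,1,-1,0,0,0,0,0,0,0,0,0,0]],
![
  ![0,0,-1,-1,1,0,0,0,0,0,0,0,0,0,0],
  ![0,0,1,1,0,0,0,0,0,0,0,0,0,0,0],
  ![1,0,0,1,-1,0,0,0,0,0,0,0,0,0,0],
  ![0,0,1,0,0,0,0,0,0,0,0,0,0,0,0],
  ![0,1,0,1,-1,0,0,0,0,0,0,0,0,0,0]],
![
  ![0,0,-1,-1,1,0,0,0,0,0,0,0,0,0,0],
  ![0,0,1,1,0,0,0,0,0,0,0,0,0,0,0],
  ![1,0,0,1,-1,0,0,0,0,0,0,0,0,0,0],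
  ![0,0,1,0,0,0,0,0,0,0,0,0,0,0,0],
  ![0,1,0,1,-1,0,0,0,0,0,0,0,0,0,0]],
![
  ![0,0,-1,-1,1,0,0,0,0,0,0,0,0,0,0],
  ![0,0,1,1,0,0,0,0,0,0,0,0,0,0,0],
  ![1,0,0,1,-1,0,0,0,0,0,0,0,0,0,0],
  ![0,0,1,0,0,0,0,0,0,0,0,0,0,0,0],
  ![0,1,0,1,-1,0,0,0,0,0,0,0,0,0,0]],
![
  ![0,0,-1,-1,1,0,0,0,0,0,0,0,0,0,0],
  ![0,0,1,1,0,0,0,0,0,0,0,0,0,0,0],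
  ![1,0,0,1,-1,0,0,0,0,0,0,0,0,0,0],
  ![0,0,1,0,0,0,0,0,0,0,0,0,0,0,0],
  ![0,1,0,1,-1,0,0,0,0,0,0,0,0,0,0]],
![
  ![0,0,-1,-1,1,0,0,0,0,0,0,0,0,0,0],
  ![0,0,1,1,0,0,0,0,0,0,0,0,0,0,0],
  ![1,0,0,1,-1,0,0,0,0,0,0,0,0,0,0],
  ![0,0,1,0,0,0,0,0,0,0,0,0,0,0,0],
  ![0,1,0,1,-1,0,0,0,0,0,0,0,0,0,0]],
![
  ![0,0,-1,-1,1,0,0,0,0,0,0,0,0,0,0],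
  ![0,0,1,1,0,0,0,0,0,0,0,0,0,0,0],
  ![1,0,0,1,-1,0,0,0,0,0,0,0,0,0,0],
  ![0,0,1,0,0,0,0,0,0,0,0,0,0,0,0],
  ![0,1,0,1,-1,0,0,0,0,0,0,0,0,0,0]],
![
  ![0,0,-1,-1,1,0,0,0,0,0,0,0,0,0,0],
  ![0,0,1,1,0,0,0,0,0,0,0,0,0,0,0],
  ![1,0,0,1,-1,0,0,0,0,0,0,0,0,0,0],
  ![0,0,1,0,0,0,0,0,0,0,0,0,0,0,0],
  ![0,1,0,1,-1,0,0,0,0,0,0,0,0,0,0]],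
![
  ![0,0,-1,-1,1,0,0,0,0,0,0,0,0,0,0],
  ![0,0,1,1,0,0,0,0,0,0,0,0,0,0,0],
  ![1,0,0,1,-1,0,0,0,0,0,0,0,0,0,0],
  ![0,0,1,0,0,0,0,0,0,0,0,0,0,0,0],
  ![0,1,0,1,-1,0,0,0,0,0,0,0,0,0,0]],
![
  ![0,0,-1,-1,1,0,0,0,0,0,0,0,0,0,0],
  ![0,0,1,1,0,0,0,0,0,0,0,0,0,0,0],
  ![1,0,0,1,-1,0,0,0,0,0,0,0,0,0,0],
  ![0,0,1,0,0,0,0,0,0,0,0,0,0,0,0],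
  ![0,1,0,1,-1,0,0,0,0,0,0,0,0,0,0]]]

lemma coeff_diag : ∀ j : Fin 15, ∀ k : Fin 5, coeff j k j = 0 := by decide

lemma coeff_sum : ∀ j : Fin 15, ∀ k : Fin 5,
    ∑ i, coeff j k i • Pcol i = Pi.single k (1:ℤ) := by decide

lemma mem_span_of_comb (j : Fin 15) (c : Fin 15 → ℤ) (hcj : c j = 0)
    (v : Fin 5 → ℤ) (hv : ∑ i, c i • Pcol i = v) :
    v ∈ Submodule.span ℤ (Pcol '' {i | i ≠ j}) := by
  subst hv
  refine Submodule.sum_mem _ fun i _ => ?_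
  by_cases h : i = j
  · subst h; rw [hcj, zero_smul]; exact zero_mem _
  · exact Submodule.smul_mem _ _ (Submodule.subset_span (Set.mem_image_of_mem _ h))

lemma span_top_of (j : Fin 15)
    (h : ∀ k : Fin 5, Pi.single k (1:ℤ) ∈ Submodule.span ℤ (Pcol '' {i | i ≠ j})) :
    Submodule.span ℤ (Pcol '' {i | i ≠ j}) = ⊤ := by
  rw [eq_top_iff]
  rintro x -
  have hx : x = ∑ k : Fin 5, x k • Pi.single k (1:ℤ) := by
    funext m
    simp [Finset.sum_apply, Pi.single_apply, mul_ite]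
  rw [hx]
  exact Submodule.sum_mem _ fun k _ => Submodule.smul_mem _ _ (h k)

/-- For every `j`, the 14 columns of `P` other than the `j`-th generate `ℤ⁵`
as a group. -/
theorem stmt_14 :
    ∀ j : Fin 15, AddSubgroup.closure (Pcol '' {i | i ≠ j}) = ⊤ := by
  intro j
  rw [← Submodule.span_int_eq_addSubgroupClosure]
  rw [span_top_of j fun k =>
    mem_span_of_comb j (coeff j k) (coeff_diag j k) _ (coeff_sum j k)]
  rfl
end
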